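/- Let I ⊆ ℝ be an interval, p ≥ 2, M : I^p → I^p a weakly contractive mean-type mapping, and suppose K : I^p → I is a continuous M-invariant mean. Then a continuous function F : I^p → ℝ satisfies F ∘ M = F if and only if there exists a continuous function φ : I → ℝ such that F = φ ∘ K. -/

import Mathlib

/-!
Forward direction: take `φ x = F (x, …, x)`. Fix `v` and let `C` be the set of `w` with all
coordinates in `[min v, max v]` and `F w = F v`, `K w = K v`. It is compact, contains `v`, and
is `M`-invariant because `M` is mean-type and `F`, `K` are `M`-invariant. A point of `C`
minimising `max - min` must be constant, since otherwise weak contractivity moves it to a point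
of `C` with smaller spread; and a constant vector `(c, …, c)` in `C` has `c = K (c, …, c) = K v`,
so `F v = φ (K v)`.
-/

open Set Filter Topology

noncomputable def vmax {p : ℕ} (v : Fin p → ℝ) : ℝ := ⨆ i, v i
noncomputable def vmin {p : ℕ} (v : Fin p → ℝ) : ℝ := ⨅ i, v i

/-- The "box" `I^p`. -/
def box (I : Set ℝ) (p : ℕ) : Set (Fin p → ℝ) := {v | ∀ i, v i ∈ I}

/-- `K` is a mean on `I^p`: internality. -/
def IsMeanOn (I : Set ℝ) (p : ℕ) (K : (Fin p → ℝ) → ℝ) : Prop :=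
  ∀ v ∈ box I p, vmin v ≤ K v ∧ K v ≤ vmax v

/-- `M` is a mean-type mapping: each coordinate is a mean. -/
def MeanType (I : Set ℝ) (p : ℕ) (M : (Fin p → ℝ) → (Fin p → ℝ)) : Prop :=
  ∀ v ∈ box I p, ∀ i, vmin v ≤ M v i ∧ M v i ≤ vmax v

def Nonconstant {p : ℕ} (v : Fin p → ℝ) : Prop := ¬ ∃ c, ∀ i, v i = c

def Contractive (I : Set ℝ) (p : ℕ) (M : (Fin p → ℝ) → (Fin p → ℝ)) : Prop :=
  ∀ v ∈ box I p, Nonconstant v → vmax (M v) - vmin (M v) < vmax v - vmin v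

def WeaklyContractive (I : Set ℝ) (p : ℕ) (M : (Fin p → ℝ) → (Fin p → ℝ)) : Prop :=
  ∀ v ∈ box I p, Nonconstant v → ∃ n₀ : ℕ, ∀ n ≥ n₀,
    vmax (M^[n] v) - vmin (M^[n] v) < vmax v - vmin v

/-- `T(a) = {v ∈ I^p : max v - min v ≤ a}`. -/
def Tset (I : Set ℝ) (p : ℕ) (a : ℝ) : Set (Fin p → ℝ) :=
  {v ∈ box I p | vmax v - vmin v ≤ a}

section VMaxVMin

variable {p : ℕ}

lemma le_vmax (v : Fin p → ℝ) (i : Fin p) : v i ≤ vmax v :=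
  le_ciSup (finite_range v).bddAbove i

lemma vmin_le (v : Fin p → ℝ) (i : Fin p) : vmin v ≤ v i :=
  ciInf_le (finite_range v).bddBelow i

variable [Nonempty (Fin p)]

lemma vmax_le {v : Fin p → ℝ} {a : ℝ} (h : ∀ i, v i ≤ a) : vmax v ≤ a :=
  ciSup_le h

lemma le_vmin {v : Fin p → ℝ} {a : ℝ} (h : ∀ i, a ≤ v i) : a ≤ vmin v :=
  le_ciInf h

lemma exists_eq_vmax (v : Fin p → ℝ) : ∃ i, v i = vmax v := by
  obtain ⟨i, hi⟩ := Finite.exists_max v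
  exact ⟨i, le_antisymm (le_vmax v i) (vmax_le hi)⟩

lemma exists_eq_vmin (v : Fin p → ℝ) : ∃ i, v i = vmin v := by
  obtain ⟨i, hi⟩ := Finite.exists_min v
  exact ⟨i, le_antisymm (le_vmin hi) (vmin_le v i)⟩

lemma continuous_vmax : Continuous (vmax : (Fin p → ℝ) → ℝ) := by
  have h : (vmax : (Fin p → ℝ) → ℝ) = fun v => Finset.univ.sup' Finset.univ_nonempty v :=
    funext fun v => (Finset.sup'_univ_eq_ciSup v).symm
  rw [h]
  exact Continuous.finset_sup'_apply _ fun i _ => continuous_apply i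

lemma continuous_vmin : Continuous (vmin : (Fin p → ℝ) → ℝ) := by
  have h : (vmin : (Fin p → ℝ) → ℝ) = fun v => Finset.univ.inf' Finset.univ_nonempty v :=
    funext fun v => (Finset.inf'_univ_eq_ciInf v).symm
  rw [h]
  exact Continuous.finset_inf'_apply _ fun i _ => continuous_apply i

lemma vmax_const (c : ℝ) : vmax (fun _ : Fin p => c) = c := ciSup_const

lemma vmin_const (c : ℝ) : vmin (fun _ : Fin p => c) = c := ciInf_const

end VMaxVMin

section Box

variable {I J : Set ℝ} {p : ℕ}

lemma box_mono (h : I ⊆ J) : box I p ⊆ box J p :=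
  fun _ hv i => h (hv i)

lemma isCompact_box_Icc (a b : ℝ) : IsCompact (box (Icc a b) p) := by
  simpa [box, Set.pi] using isCompact_univ_pi fun _ : Fin p => isCompact_Icc (a := a) (b := b)

lemma mem_box_Icc_vmin_vmax [Nonempty (Fin p)] (v : Fin p → ℝ) :
    v ∈ box (Icc (vmin v) (vmax v)) p :=
  fun i => ⟨vmin_le v i, le_vmax v i⟩

lemma Icc_vmin_vmax_subset [Nonempty (Fin p)] (hI : I.OrdConnected) {v : Fin p → ℝ}
    (hv : v ∈ box I p) : Icc (vmin v) (vmax v) ⊆ I := by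
  obtain ⟨i, hi⟩ := exists_eq_vmin v
  obtain ⟨j, hj⟩ := exists_eq_vmax v
  exact hI.out (hi ▸ hv i) (hj ▸ hv j)

lemma MeanType.mapsTo_box [Nonempty (Fin p)] {M : (Fin p → ℝ) → (Fin p → ℝ)}
    (hM : MeanType I p M) (hJI : J ⊆ I) (hJ : J.OrdConnected) :
    MapsTo M (box J p) (box J p) :=
  fun w hw i => Icc_vmin_vmax_subset hJ hw (hM w (box_mono hJI hw) i)

lemma IsMeanOn.apply_const [Nonempty (Fin p)] {K : (Fin p → ℝ) → ℝ} (hK : IsMeanOn I p K)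
    {c : ℝ} (hc : c ∈ I) : K (fun _ => c) = c := by
  have h := hK (fun _ => c) fun _ => hc
  rw [vmin_const, vmax_const] at h
  exact le_antisymm h.2 h.1

end Box

lemma WeaklyContractive.exists_const_mem {I : Set ℝ} {p : ℕ} [Nonempty (Fin p)]
    {M : (Fin p → ℝ) → (Fin p → ℝ)} (hW : WeaklyContractive I p M) {C : Set (Fin p → ℝ)}
    (hC : IsCompact C) (hCI : C ⊆ box I p) (hMC : MapsTo M C C) (hne : C.Nonempty) :
    ∃ c, (fun _ => c) ∈ C := by
  obtain ⟨w, hwC, hwmin⟩ :=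
    hC.exists_isMinOn hne (continuous_vmax.sub continuous_vmin).continuousOn
  have hconst : ¬ Nonconstant w := by
    intro hnc
    obtain ⟨n₀, hn₀⟩ := hW w (hCI hwC) hnc
    exact (hn₀ n₀ le_rfl).not_ge (hwmin (hMC.iterate n₀ hwC))
  obtain ⟨c, hc⟩ := not_not.mp hconst
  exact ⟨c, funext hc ▸ hwC⟩

lemma eq_apply_const_of_comp_eq {I : Set ℝ} (hI : I.OrdConnected) {p : ℕ} [Nonempty (Fin p)]
    {M : (Fin p → ℝ) → (Fin p → ℝ)} (hMT : MeanType I p M) (hW : WeaklyContractive I p M)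
    {K : (Fin p → ℝ) → ℝ} (hKm : IsMeanOn I p K) (hKc : ContinuousOn K (box I p))
    (hKi : ∀ v ∈ box I p, K (M v) = K v)
    {F : (Fin p → ℝ) → ℝ} (hFc : ContinuousOn F (box I p)) (hFi : ∀ v ∈ box I p, F (M v) = F v)
    {v : Fin p → ℝ} (hv : v ∈ box I p) :
    F v = F (fun _ => K v) := by
  set J := Icc (vmin v) (vmax v)
  have hJI : J ⊆ I := Icc_vmin_vmax_subset hI hv
  have hJbox : box J p ⊆ box I p := box_mono hJI
  set C := box J p ∩ F ⁻¹' {F v} ∩ K ⁻¹' {K v}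
  have hCbox : C ⊆ box I p := fun w hw => hJbox hw.1.1
  have hCclosed : IsClosed C :=
    (hKc.mono fun w hw => hJbox hw.1).preimage_isClosed_of_isClosed
      ((hFc.mono hJbox).preimage_isClosed_of_isClosed (isCompact_box_Icc _ _).isClosed
        isClosed_singleton) isClosed_singleton
  have hMC : MapsTo M C C := fun w ⟨⟨hwJ, hwF⟩, hwK⟩ =>
    ⟨⟨hMT.mapsTo_box hJI ordConnected_Icc hwJ, (hFi w (hJbox hwJ)).trans hwF⟩,
      (hKi w (hJbox hwJ)).trans hwK⟩
  obtain ⟨c, ⟨⟨hcJ, hcF⟩, hcK⟩⟩ := hW.exists_const_mem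
    ((isCompact_box_Icc _ _).of_isClosed_subset hCclosed fun w hw => hw.1.1) hCbox hMC
    ⟨v, ⟨mem_box_Icc_vmin_vmax v, rfl⟩, rfl⟩
  have hc : c = K v := (hKm.apply_const (hJbox hcJ (Classical.arbitrary _))).symm.trans hcK
  rw [← hc]
  exact hcF.symm

theorem stmt5 (I : Set ℝ) (hI : I.OrdConnected) (p : ℕ) (hp : 2 ≤ p)
    (M : (Fin p → ℝ) → (Fin p → ℝ)) (hMT : MeanType I p M)
    (hW : WeaklyContractive I p M)
    (K : (Fin p → ℝ) → ℝ) (hKm : IsMeanOn I p K) (hKc : ContinuousOn K (box I p))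
    (hKi : ∀ v ∈ box I p, K (M v) = K v)
    (F : (Fin p → ℝ) → ℝ) (hFc : ContinuousOn F (box I p)) :
    (∀ v ∈ box I p, F (M v) = F v) ↔
      ∃ φ : ℝ → ℝ, ContinuousOn φ I ∧ ∀ v ∈ box I p, F v = φ (K v) := by
  have : Nonempty (Fin p) := ⟨⟨0, by omega⟩⟩
  constructor
  · intro hFi
    refine ⟨fun x => F (fun _ => x), ?_, fun v hv =>
      eq_apply_const_of_comp_eq hI hMT hW hKm hKc hKi hFc hFi hv⟩
    exact hFc.comp (continuous_pi fun _ => continuous_id).continuousOn fun _ hx _ => hx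
  · rintro ⟨φ, -, hφ⟩ v hv
    rw [hφ (M v) (hMT.mapsTo_box subset_rfl hI hv), hφ v hv, hKi v hv]
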